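/- arXiv:1906.07053 — 3 statements merged into one kernel-verified Lean document; each statement's English description precedes it below -/
import Mathlib

section
/- Let X be a spectral space and Y ⊆ X a subset such that every nonempty finite subset of Y has a supremum in X (with respect to the specialization order). Then the set Y_f of suprema of nonempty finite subsets of Y and the set Y_∞ of suprema of arbitrary nonempty subsets of Y have the same closure in the constructible topology of X. -/
/-!
Only the inclusion `Y_∞ ⊆ cl(Y_f)` needs an argument. Let `b = sup Z` and let `W` be a
quasi-compact open set with `b ∉ W`. An upper bound of `Z` lying in `W` would force `b ∈ W`, so
`W` misses the closed set `⋂_{z ∈ Z} cl {z}` of upper bounds of `Z`; by quasi-compactness it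
already misses the upper bounds of a finite `F ⊆ Z`, in particular `c = sup F ∉ W`, while
`c ≤ b`. Since every constructible neighbourhood of `b` contains one of the form
`U₁ ∩ … ∩ Uₙ \ W` with `Uᵢ` open and `W` quasi-compact open, and open sets are down-closed,
`c` lies in it.
-/

open Set TopologicalSpace

/-- A topology `t` on `X` makes `X` a spectral space: quasi-compact, `T0`, sober, with a basis
of quasi-compact open sets closed under finite (binary) intersections. -/
def IsSpectral (X : Type*) (t : TopologicalSpace X) : Prop :=
  @CompactSpace X t ∧ @T0Space X t ∧ @QuasiSober X t ∧
    ∃ B : Set (Set X),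
      (∀ s ∈ B, @IsCompact X t s ∧ @IsOpen X t s) ∧
      (∀ s ∈ B, ∀ u ∈ B, s ∩ u ∈ B) ∧
      @TopologicalSpace.IsTopologicalBasis X t B

/-- The specialization order of a topology: `x ≤ y` iff `y ∈ closure {x}`. -/
def specLE {X : Type*} (t : TopologicalSpace X) (x y : X) : Prop := y ∈ @closure X t {x}

/-- `b` is the supremum of `S` with respect to the specialization order of `t`. -/
def IsSupSpec {X : Type*} (t : TopologicalSpace X) (S : Set X) (b : X) : Prop :=
  (∀ x ∈ S, specLE t x b) ∧ ∀ c, (∀ x ∈ S, specLE t x c) → specLE t b c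

/-- `b` is the infimum of `S` with respect to the specialization order of `t`. -/
def IsInfSpec {X : Type*} (t : TopologicalSpace X) (S : Set X) (b : X) : Prop :=
  (∀ x ∈ S, specLE t b x) ∧ ∀ c, (∀ x ∈ S, specLE t c x) → specLE t c b

/-- The constructible (patch) topology associated to a topology `t`: the coarsest topology in
which all quasi-compact `t`-open sets are clopen. -/
def patchOf {X : Type*} (t : TopologicalSpace X) : TopologicalSpace X :=
  TopologicalSpace.generateFrom
    {s : Set X | (@IsCompact X t s ∧ @IsOpen X t s) ∨ (@IsCompact X t sᶜ ∧ @IsOpen X t sᶜ)}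

/-- Closure with respect to the constructible (patch) topology of `t`. -/
def patchClosure {X : Type*} (t : TopologicalSpace X) (Y : Set X) : Set X :=
  @closure X (patchOf t) Y

section

variable {X : Type*} [t : TopologicalSpace X]

theorem specLE_iff_specializes {x y : X} : specLE t x y ↔ x ⤳ y :=
  specializes_iff_mem_closure.symm

theorem IsSupSpec.specializes_of_subset {Z F : Set X} {b c : X} (hb : IsSupSpec t Z b)
    (hc : IsSupSpec t F c) (hFZ : F ⊆ Z) : c ⤳ b :=
  specLE_iff_specializes.1 <| hc.2 b fun x hx ↦ hb.1 x (hFZ hx)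

theorem IsSupSpec.exists_finite_subset_upperBounds_notMem {Z : Set X} {b : X}
    (hb : IsSupSpec t Z b) (hZ : Z.Nonempty) {V : Set X} (hVc : IsCompact V) (hVo : IsOpen V)
    (hbV : b ∉ V) :
    ∃ F ⊆ Z, F.Finite ∧ F.Nonempty ∧ ∀ a, (∀ x ∈ F, specLE t x a) → a ∉ V := by
  obtain ⟨x₀, hx₀⟩ := hZ
  have hdisj : V ∩ ⋂ z : Z, closure {(z : X)} = ∅ := by
    refine eq_empty_of_forall_notMem fun a ⟨haV, ha⟩ ↦ hbV ?_
    have hba : specLE t b a := hb.2 a fun z hz ↦ mem_iInter.1 ha ⟨z, hz⟩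
    exact (specLE_iff_specializes.1 hba).mem_open hVo haV
  obtain ⟨u, hu⟩ := hVc.elim_finite_subfamily_closed _ (fun _ ↦ isClosed_closure) hdisj
  refine ⟨insert x₀ (Subtype.val '' (u : Set Z)), ?_, (u.finite_toSet.image _).insert x₀,
    insert_nonempty _ _, fun a ha haV ↦ ?_⟩
  · rintro x (rfl | ⟨z, -, rfl⟩)
    exacts [hx₀, z.2]
  · refine (eq_empty_iff_forall_notMem.1 hu) a ⟨haV, mem_iInter₂.2 fun z hz ↦ ?_⟩
    exact ha z (mem_insert_of_mem _ ⟨z, hz, rfl⟩)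

theorem mem_patchClosure_of_forall {A : Set X} {b : X}
    (h : ∀ W, IsCompact W → IsOpen W → b ∉ W → ∃ c ∈ A, c ⤳ b ∧ c ∉ W) :
    b ∈ patchClosure t A := by
  rw [patchClosure, @IsTopologicalBasis.mem_closure_iff X (patchOf t) _
    (@isTopologicalBasis_of_subbasis X (patchOf t) _ rfl)]
  rintro _ ⟨f, ⟨hf, hfS⟩, rfl⟩ hb
  set W := ⋃ s ∈ {s ∈ f | IsCompact sᶜ ∧ IsOpen sᶜ}, sᶜ
  have hWc : IsCompact W := (hf.subset (sep_subset _ _)).isCompact_biUnion fun s hs ↦ hs.2.1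
  have hWo : IsOpen W := isOpen_biUnion fun s hs ↦ hs.2.2
  have hbW : b ∉ W := by
    simp only [W, mem_iUnion, mem_compl_iff, not_exists, not_not]
    exact fun s hs ↦ hb s hs.1
  obtain ⟨c, hcA, hcb, hcW⟩ := h W hWc hWo hbW
  refine ⟨c, mem_sInter.2 fun s hs ↦ ?_, hcA⟩
  rcases hfS hs with ⟨-, hso⟩ | hsc
  · exact hcb.mem_open hso (hb s hs)
  · by_contra hcs
    exact hcW (mem_biUnion (x := s) ⟨hs, hsc⟩ hcs)

end

theorem stmt1_general {X : Type*} [t : TopologicalSpace X] (Y : Set X)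
    (hf : ∀ F : Set X, F ⊆ Y → F.Finite → F.Nonempty → ∃ b, IsSupSpec t F b) :
    patchClosure t {x | ∃ F : Set X, F ⊆ Y ∧ F.Finite ∧ F.Nonempty ∧ IsSupSpec t F x} =
      patchClosure t {x | ∃ Z : Set X, Z ⊆ Y ∧ Z.Nonempty ∧ IsSupSpec t Z x} := by
  set Yf := {x | ∃ F : Set X, F ⊆ Y ∧ F.Finite ∧ F.Nonempty ∧ IsSupSpec t F x}
  set Yinf := {x | ∃ Z : Set X, Z ⊆ Y ∧ Z.Nonempty ∧ IsSupSpec t Z x}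
  have hfin : Yf ⊆ Yinf := fun x ⟨F, hFY, _, hF, hx⟩ ↦ ⟨F, hFY, hF, hx⟩
  have hinf : Yinf ⊆ patchClosure t Yf := by
    rintro b ⟨Z, hZY, hZ, hb⟩
    refine mem_patchClosure_of_forall fun W hWc hWo hbW ↦ ?_
    obtain ⟨F, hFZ, hFfin, hF, hFW⟩ := hb.exists_finite_subset_upperBounds_notMem hZ hWc hWo hbW
    obtain ⟨c, hc⟩ := hf F (hFZ.trans hZY) hFfin hF
    exact ⟨c, ⟨F, hFZ.trans hZY, hFfin, hF, hc⟩, hb.specializes_of_subset hc hFZ, hFW c hc.1⟩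
  exact subset_antisymm (@closure_mono X (patchOf t) _ _ hfin)
    (@closure_minimal X (patchOf t) _ _ hinf (@isClosed_closure X (patchOf t) _))

theorem stmt1 {X : Type*} [t : TopologicalSpace X] (hX : IsSpectral X t) (Y : Set X)
    (hf : ∀ F : Set X, F ⊆ Y → F.Finite → F.Nonempty → ∃ b, IsSupSpec t F b) :
    patchClosure t {x | ∃ F : Set X, F ⊆ Y ∧ F.Finite ∧ F.Nonempty ∧ IsSupSpec t F x} =
      patchClosure t {x | ∃ Z : Set X, Z ⊆ Y ∧ Z.Nonempty ∧ IsSupSpec t Z x} :=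
  stmt1_general (t := t) Y hf
end

section
/- Let L be an algebraic lattice of sets in S and let M ∈ L be a maximal element of L \ {S}. Then M is an isolated point of L with respect to the constructible topology if and only if M is finitely generated. -/
/-!
Zariski-open subsets of `L` are upper sets, and the sets `U(F) = {A | F ⊆ A}` with `F` finite
form a basis; `U(F)` is the principal upper set of `F^c = closureL L F`, hence quasi-compact.
If `{M}` is patch-open it contains `V ∩ C` with `M ∈ V` Zariski-open and `M ∈ C` Zariski-closed,
hence a lower set. Picking a basic `U(F) ⊆ V` around `M`, the point `F^c ⊆ M` lies in `V ∩ C`,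
so `M = F^c`. Conversely, if `M = F^c` and `s ∉ M`, maximality of `M` gives
`{M} = U(F) \ U({s})`, which is patch-open.
-/

open Set TopologicalSpace

def IsAlgebraicLattice {S : Type*} (L : Set (Set S)) : Prop :=
  (∀ D : Set (Set S), D ⊆ L → ⋂₀ D ∈ L) ∧
  (∀ D : Set (Set S), D ⊆ L → D.Nonempty → DirectedOn (· ⊆ ·) D → ⋃₀ D ∈ L)

def zarTopL {S : Type*} (L : Set (Set S)) : TopologicalSpace ↥L :=
  TopologicalSpace.generateFrom
    {U : Set ↥L | ∃ F : Set S, F.Finite ∧ U = {A : ↥L | F ⊆ (A : Set S)}}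

def FinGenL {S : Type*} (L : Set (Set S)) (A : Set S) : Prop :=
  ∃ F : Set S, F.Finite ∧ A = ⋂₀ {I ∈ L | F ⊆ I}

open Topology Filter

section Patch

variable {X : Type*} [t : TopologicalSpace X]

lemma IsCompact.isOpen_patchOf {s : Set X} (hc : IsCompact s) (ho : IsOpen s) :
    IsOpen[patchOf t] s :=
  isOpen_generateFrom_of_mem (Or.inl ⟨hc, ho⟩)

lemma IsCompact.isOpen_patchOf_compl {s : Set X} (hc : IsCompact s) (ho : IsOpen s) :
    IsOpen[patchOf t] sᶜ :=
  isOpen_generateFrom_of_mem (Or.inr ⟨by rwa [compl_compl], by rwa [compl_compl]⟩)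

lemma exists_isOpen_isClosed_inter_subset_of_isOpen_patchOf {U : Set X} (hU : IsOpen[patchOf t] U)
    {x : X} (hx : x ∈ U) : ∃ V C, IsOpen V ∧ IsClosed C ∧ x ∈ V ∩ C ∧ V ∩ C ⊆ U := by
  induction hU generalizing x with
  | basic s hs =>
    rcases hs with ⟨-, ho⟩ | ⟨-, ho⟩
    · exact ⟨s, univ, ho, isClosed_univ, ⟨hx, trivial⟩, inter_subset_left⟩
    · exact ⟨univ, s, isOpen_univ, ⟨ho⟩, ⟨trivial, hx⟩, inter_subset_right⟩
  | univ => exact ⟨univ, univ, isOpen_univ, isClosed_univ, ⟨trivial, trivial⟩, subset_univ _⟩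
  | inter u v _ _ ihu ihv =>
    obtain ⟨V₁, C₁, hV₁, hC₁, hx₁, h₁⟩ := ihu hx.1
    obtain ⟨V₂, C₂, hV₂, hC₂, hx₂, h₂⟩ := ihv hx.2
    refine ⟨V₁ ∩ V₂, C₁ ∩ C₂, hV₁.inter hV₂, hC₁.inter hC₂, ⟨⟨hx₁.1, hx₂.1⟩, hx₁.2, hx₂.2⟩, ?_⟩
    exact fun y hy => ⟨h₁ ⟨hy.1.1, hy.2.1⟩, h₂ ⟨hy.1.2, hy.2.2⟩⟩
  | sUnion K _ ih =>
    obtain ⟨s, hs, hxs⟩ := hx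
    obtain ⟨V, C, hV, hC, hxVC, hVC⟩ := ih s hs hxs
    exact ⟨V, C, hV, hC, hxVC, hVC.trans (subset_sUnion_of_mem hs)⟩

end Patch

lemma isCompact_Ici_of_isUpperSet {X : Type*} [Preorder X] [TopologicalSpace X]
    (h : ∀ U : Set X, IsOpen U → IsUpperSet U) (x : X) : IsCompact (Ici x) := by
  have : 𝓟 (Ici x) ≤ 𝓝 x := le_nhds_iff.2 fun U hxU hU => h U hU |>.Ici_subset hxU
  exact fun f _ hf => ⟨x, self_mem_Ici, by rwa [ClusterPt, inf_of_le_right (hf.trans this)]⟩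

section Zariski

variable {S : Type*}

def closureL (L : Set (Set S)) (F : Set S) : Set S := ⋂₀ {I ∈ L | F ⊆ I}

def zarBasicOpen (L : Set (Set S)) (F : Set S) : Set ↥L := {A | F ⊆ (A : Set S)}

variable {L : Set (Set S)}

lemma closureL_mem (hL : ∀ D ⊆ L, ⋂₀ D ∈ L) (F : Set S) : closureL L F ∈ L :=
  hL _ (sep_subset _ _)

lemma subset_closureL (F : Set S) : F ⊆ closureL L F :=
  subset_sInter fun _ hI => hI.2

lemma closureL_subset {F A : Set S} (hA : A ∈ L) (hFA : F ⊆ A) : closureL L F ⊆ A :=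
  sInter_subset_of_mem ⟨hA, hFA⟩

lemma zarBasicOpen_eq_Ici (hL : ∀ D ⊆ L, ⋂₀ D ∈ L) (F : Set S) :
    zarBasicOpen L F = Ici ⟨closureL L F, closureL_mem hL F⟩ :=
  ext fun A => ⟨closureL_subset A.2, (subset_closureL F).trans⟩

attribute [local instance] zarTopL

lemma isOpen_zarBasicOpen {F : Set S} (hF : F.Finite) : IsOpen (zarBasicOpen L F) :=
  isOpen_generateFrom_of_mem ⟨F, hF, rfl⟩

lemma isTopologicalBasis_zarBasicOpen :
    IsTopologicalBasis {U : Set ↥L | ∃ F : Set S, F.Finite ∧ U = zarBasicOpen L F} where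
  exists_subset_inter := by
    rintro _ ⟨F, hF, rfl⟩ _ ⟨G, hG, rfl⟩ A hA
    exact ⟨_, ⟨F ∪ G, hF.union hG, rfl⟩, union_subset hA.1 hA.2,
      fun B hB => ⟨subset_union_left.trans hB, subset_union_right.trans hB⟩⟩
  sUnion_eq := sUnion_eq_univ_iff.2 fun A => ⟨_, ⟨∅, finite_empty, rfl⟩, empty_subset _⟩
  eq_generateFrom := rfl

lemma isUpperSet_of_isOpen_zarTopL {U : Set ↥L} (hU : IsOpen U) : IsUpperSet U :=
  le_generateFrom (t := Topology.upperSet ↥L)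
    (by rintro _ ⟨F, -, rfl⟩ A B hAB hA; exact hA.trans (Subtype.coe_le_coe.2 hAB)) U hU

lemma isCompact_zarBasicOpen (hL : ∀ D ⊆ L, ⋂₀ D ∈ L) (F : Set S) :
    IsCompact (zarBasicOpen L F) :=
  zarBasicOpen_eq_Ici hL F ▸ isCompact_Ici_of_isUpperSet (fun _ => isUpperSet_of_isOpen_zarTopL) _

lemma finGenL_of_isOpen_patchOf_singleton (hL : ∀ D ⊆ L, ⋂₀ D ∈ L) {M : Set S} (hM : M ∈ L)
    (h : IsOpen[patchOf (zarTopL L)] {(⟨M, hM⟩ : ↥L)}) : FinGenL L M := by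
  obtain ⟨V, C, hV, hC, ⟨hMV, hMC⟩, hVC⟩ :=
    exists_isOpen_isClosed_inter_subset_of_isOpen_patchOf h rfl
  obtain ⟨_, ⟨F, hF, rfl⟩, hMF, hFV⟩ :=
    isTopologicalBasis_zarBasicOpen.exists_subset_of_mem_open hMV hV
  let N : ↥L := ⟨closureL L F, closureL_mem hL F⟩
  have hNV : N ∈ V := hFV (subset_closureL F)
  have hNC : N ∈ C :=
    isUpperSet_compl.1 (isUpperSet_of_isOpen_zarTopL hC.isOpen_compl) (closureL_subset hM hMF) hMC
  exact ⟨F, hF, congrArg Subtype.val (hVC ⟨hNV, hNC⟩).symm⟩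

lemma isOpen_patchOf_singleton_of_finGenL (hL : ∀ D ⊆ L, ⋂₀ D ∈ L) {M : Set S} (hM : M ∈ L)
    (hMne : M ≠ univ) (hmax : ∀ N ∈ L, M ⊆ N → N = M ∨ N = univ) (hfg : FinGenL L M) :
    IsOpen[patchOf (zarTopL L)] {(⟨M, hM⟩ : ↥L)} := by
  obtain ⟨F, hF, rfl⟩ := hfg
  obtain ⟨s, hs⟩ := (ne_univ_iff_exists_notMem _).1 hMne
  have hsingleton : {(⟨_, hM⟩ : ↥L)} = zarBasicOpen L F ∩ (zarBasicOpen L {s})ᶜ := by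
    ext A
    simp only [zarBasicOpen, mem_singleton_iff, mem_inter_iff, mem_compl_iff, mem_ofPred_eq,
      singleton_subset_iff]
    constructor
    · rintro rfl
      exact ⟨subset_closureL F, hs⟩
    · rintro ⟨hFA, hsA⟩
      refine Subtype.ext ((hmax A A.2 (closureL_subset A.2 hFA)).resolve_right ?_)
      exact fun hA => hsA (hA ▸ mem_univ s)
  rw [hsingleton]
  exact (patchOf (zarTopL L)).isOpen_inter _ _
    ((isCompact_zarBasicOpen hL F).isOpen_patchOf (isOpen_zarBasicOpen hF))
    ((isCompact_zarBasicOpen hL {s}).isOpen_patchOf_compl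
      (isOpen_zarBasicOpen (finite_singleton s)))

end Zariski

theorem stmt10 {S : Type*} (L : Set (Set S)) (hL : IsAlgebraicLattice L)
    (M : Set S) (hM : M ∈ L) (hMne : M ≠ Set.univ)
    (hmax : ∀ N ∈ L, M ⊆ N → N = M ∨ N = Set.univ) :
    @IsOpen ↥L (patchOf (zarTopL L)) {(⟨M, hM⟩ : ↥L)} ↔ FinGenL L M :=
  ⟨finGenL_of_isOpen_patchOf_singleton hL.1 hM,
    isOpen_patchOf_singleton_of_finGenL hL.1 hM hMne hmax⟩
end

section
/- Let (R, m) be a Noetherian local ring. Then the set of m-primary ideals is dense, with respect to the constructible topology, in the space I•(R) of proper ideals of R (endowed with the Zariski topology). -/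
open Set TopologicalSpace

/-- The Zariski topology on the set of `R`-submodules of `M`, generated by the sets
`B(x₁,…,xₙ) = {N | x₁,…,xₙ ∈ N}`. -/
def zarModTop (R M : Type*) [Semiring R] [AddCommMonoid M] [Module R M] :
    TopologicalSpace (Submodule R M) :=
  TopologicalSpace.generateFrom
    {U : Set (Submodule R M) | ∃ F : Set M, F.Finite ∧ U = {N : Submodule R M | F ⊆ (N : Set M)}}

/-- The Zariski topology on the set of ideals of `R`. -/
def zarIdealTop (R : Type*) [CommRing R] : TopologicalSpace (Ideal R) :=
  TopologicalSpace.generateFrom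
    {U : Set (Ideal R) | ∃ F : Set R, F.Finite ∧ U = {I : Ideal R | F ⊆ (I : Set R)}}

/-!
For a proper ideal `I`, the `m`-primary ideals `mⁿ + I` (`n ≥ 1`) converge to `I` in the
constructible topology. Zariski-open sets of ideals are upward closed, so a quasi-compact open
set containing `I` contains all of them. A quasi-compact open set `C` avoiding `I` consists of
ideals `J ⊈ I`; by the Krull intersection theorem `⋂ₙ (mⁿ + I) = I` each such `J` satisfies
`J ⊈ mⁿ + I` for large `n`, and these conditions are open and increasing in `n`, so by
quasi-compactness a single `n` works on all of `C`, which therefore avoids `mⁿ + I`.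
-/

open IsLocalRing Filter Topology

theorem tendsto_patchOf_iff {X α : Type*} (t : TopologicalSpace X) {l : Filter α} {f : α → X}
    {x : X} :
    Tendsto f l (@nhds X (patchOf t) x) ↔
      ∀ U : Set X, @IsCompact X t U → IsOpen[t] U →
        (x ∈ U → ∀ᶠ a in l, f a ∈ U) ∧ (x ∉ U → ∀ᶠ a in l, f a ∉ U) := by
  rw [patchOf, TopologicalSpace.tendsto_nhds_generateFrom_iff]
  constructor
  · intro h U hUc hUo
    exact ⟨h U (.inl ⟨hUc, hUo⟩), h Uᶜ (.inr ⟨by rwa [compl_compl], by rwa [compl_compl]⟩)⟩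
  · rintro h s (⟨hsc, hso⟩ | ⟨hsc, hso⟩) hx
    · exact (h s hsc hso).1 hx
    · have h' := (h sᶜ hsc hso).2 (not_not_intro hx)
      simp only [mem_compl_iff, not_not] at h'
      exact h'

section Zariski

variable {R : Type*} [CommRing R]

theorem isUpperSet_of_isOpen_zarIdealTop {U : Set (Ideal R)} (hU : IsOpen[zarIdealTop R] U) :
    IsUpperSet U := by
  induction hU with
  | basic u hu =>
    obtain ⟨F, -, rfl⟩ := hu
    exact fun I J hIJ hI => hI.trans (SetLike.coe_subset_coe.mpr hIJ)
  | univ => exact isUpperSet_univ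
  | inter u v _ _ hu hv => exact hu.inter hv
  | sUnion S _ hS => exact isUpperSet_sUnion hS

theorem isOpen_zarIdealTop_setOf_not_le (K : Ideal R) :
    IsOpen[zarIdealTop R] {J : Ideal R | ¬ J ≤ K} := by
  let := zarIdealTop R
  have h : {J : Ideal R | ¬ J ≤ K} = ⋃ x ∈ (K : Set R)ᶜ, {J : Ideal R | {x} ⊆ (J : Set R)} := by
    ext J
    simp [SetLike.le_def, and_comm]
  rw [h]
  exact isOpen_biUnion fun x _ => .basic _ ⟨{x}, finite_singleton x, rfl⟩

end Zariski

theorem Ideal.radical_pow_sup_eq {R : Type*} [CommRing R] {M I : Ideal R} (hM : M.IsMaximal)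
    {n : ℕ} (hn : n ≠ 0) (hI : I ≤ M) : (M ^ n ⊔ I).radical = M := by
  rw [Ideal.radical_sup, Ideal.radical_pow _ hn, hM.isPrime.radical,
    sup_eq_left.mpr (hM.isPrime.radical_le_iff.mpr hI), hM.isPrime.radical]

theorem IsLocalRing.iInf_maximalIdeal_pow_sup_eq {R : Type*} [CommRing R] [IsNoetherianRing R]
    [IsLocalRing R] {I : Ideal R} (hI : I ≠ ⊤) : ⨅ n : ℕ, maximalIdeal R ^ n ⊔ I = I := by
  have : Nontrivial (R ⧸ I) := Ideal.Quotient.nontrivial_iff.mpr hI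
  have : IsLocalRing (R ⧸ I) := .of_surjective' _ Ideal.Quotient.mk_surjective
  have hcomap : ∀ J : Ideal R, (J.map (Ideal.Quotient.mk I)).comap (Ideal.Quotient.mk I) = J ⊔ I :=
    fun J => by
      rw [Ideal.comap_map_of_surjective _ Ideal.Quotient.mk_surjective,
        ← RingHom.ker_eq_comap_bot, Ideal.mk_ker]
  have hne : (maximalIdeal R).map (Ideal.Quotient.mk I) ≠ ⊤ := fun h => by
    have := hcomap (maximalIdeal R)
    rw [h, Ideal.comap_top, sup_eq_left.mpr (le_maximalIdeal hI)] at this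
    exact (maximalIdeal.isMaximal R).ne_top this.symm
  calc ⨅ n : ℕ, maximalIdeal R ^ n ⊔ I
      = ⨅ n : ℕ, (((maximalIdeal R).map (Ideal.Quotient.mk I)) ^ n).comap
          (Ideal.Quotient.mk I) := by
        simp_rw [← Ideal.map_pow, hcomap]
    _ = (⨅ n : ℕ, ((maximalIdeal R).map (Ideal.Quotient.mk I)) ^ n).comap
          (Ideal.Quotient.mk I) := (Ideal.comap_iInf _ _).symm
    _ = I := by
      rw [Ideal.iInf_pow_eq_bot_of_isLocalRing _ hne, ← RingHom.ker_eq_comap_bot, Ideal.mk_ker]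

abbrev properIdealTop (R : Type*) [CommRing R] : TopologicalSpace {I : Ideal R // I ≠ ⊤} :=
  TopologicalSpace.induced Subtype.val (zarIdealTop R)

section ProperIdeals

variable {R : Type*} [CommRing R] [IsLocalRing R]

theorem maximalIdeal_pow_succ_sup_ne_top (I : {I : Ideal R // I ≠ ⊤}) (n : ℕ) :
    maximalIdeal R ^ (n + 1) ⊔ (I : Ideal R) ≠ ⊤ :=
  ne_top_of_le_ne_top (maximalIdeal.isMaximal R).ne_top
    (sup_le (Ideal.pow_le_self n.succ_ne_zero) (le_maximalIdeal I.2))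

-- The exponent is `n + 1` because `m ^ 0 + I = ⊤` is not a proper ideal.
def maximalIdealPowSuccSup (I : {I : Ideal R // I ≠ ⊤}) (n : ℕ) : {I : Ideal R // I ≠ ⊤} :=
  ⟨maximalIdeal R ^ (n + 1) ⊔ I, maximalIdeal_pow_succ_sup_ne_top I n⟩

theorem eventually_maximalIdealPowSuccSup_notMem [IsNoetherianRing R]
    {I : {I : Ideal R // I ≠ ⊤}} {C : Set {I : Ideal R // I ≠ ⊤}}
    (hCc : @IsCompact _ (properIdealTop R) C) (hCo : IsOpen[properIdealTop R] C) (hI : I ∉ C) :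
    ∀ᶠ n in atTop, maximalIdealPowSuccSup I n ∉ C := by
  let := zarIdealTop R
  let := properIdealTop R
  obtain ⟨U, hU, rfl⟩ := isOpen_induced_iff.mp hCo
  let V : ℕ → Set {I : Ideal R // I ≠ ⊤} := fun n =>
    {J | ¬ (J : Ideal R) ≤ maximalIdeal R ^ (n + 1) ⊔ I}
  have hV_open (n : ℕ) : IsOpen (V n) :=
    isOpen_induced (isOpen_zarIdealTop_setOf_not_le (maximalIdeal R ^ (n + 1) ⊔ I))
  have hV_mono : Monotone V := fun a b hab J hJ hJb =>
    hJ (hJb.trans (sup_le_sup_right (Ideal.pow_le_pow_right (by omega)) _))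
  have hV_cover : Subtype.val ⁻¹' U ⊆ ⋃ n, V n := by
    intro J hJ
    have hJI : ¬ (J : Ideal R) ≤ I := fun h => hI (isUpperSet_of_isOpen_zarIdealTop hU h hJ)
    rw [← iInf_maximalIdeal_pow_sup_eq I.2, le_iInf_iff] at hJI
    push Not at hJI
    obtain ⟨n, hn⟩ := hJI
    exact mem_iUnion.mpr ⟨n, fun h =>
      hn (h.trans (sup_le_sup_right (Ideal.pow_le_pow_right n.le_succ) _))⟩
  obtain ⟨N, hN⟩ := hCc.elim_directed_cover V hV_open hV_cover hV_mono.directed_le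
  exact eventually_atTop.mpr ⟨N, fun n hn h => hV_mono hn (hN h) le_rfl⟩

theorem tendsto_maximalIdealPowSuccSup [IsNoetherianRing R] (I : {I : Ideal R // I ≠ ⊤}) :
    Tendsto (maximalIdealPowSuccSup I) atTop (@nhds _ (patchOf (properIdealTop R)) I) := by
  rw [tendsto_patchOf_iff]
  intro C hCc hCo
  refine ⟨fun hI => ?_, eventually_maximalIdealPowSuccSup_notMem hCc hCo⟩
  obtain ⟨U, hU, rfl⟩ := (isOpen_induced_iff (t := zarIdealTop R)).mp hCo
  exact .of_forall fun n => isUpperSet_of_isOpen_zarIdealTop hU le_sup_right hI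

end ProperIdeals

theorem stmt13 (R : Type*) [CommRing R] [IsNoetherianRing R] [IsLocalRing R] :
    @Dense {I : Ideal R // I ≠ ⊤}
        (patchOf (TopologicalSpace.induced Subtype.val (zarIdealTop R)))
        {I : {I : Ideal R // I ≠ ⊤} |
          (I : Ideal R).IsPrimary ∧
            (I : Ideal R).radical = IsLocalRing.maximalIdeal R} := by
  let := patchOf (properIdealTop R)
  intro I
  refine mem_closure_of_tendsto (tendsto_maximalIdealPowSuccSup I) (.of_forall fun n => ?_)
  have hrad := Ideal.radical_pow_sup_eq (maximalIdeal.isMaximal R) n.succ_ne_zero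
    (le_maximalIdeal I.2)
  exact ⟨Ideal.isPrimary_of_isMaximal_radical (hrad ▸ maximalIdeal.isMaximal R), hrad⟩
end
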